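/- arXiv:1112.4417 — 4 statements merged into one kernel-verified Lean document; each statement's English description precedes it below -/
import Mathlib

section
/- Let R be the localization of k[x,y] at the maximal ideal (x,y). Then R/(y, y - x^3 + x^2)R has dimension 2 as a k-vector space. -/
/-!
Since `1 - x` is a unit in `R`, the ideal `(y, y - x³ + x²) = (y, x²(1 - x))` equals `(y, x²)R`.
The ideal `(y, x²)` has radical `(x, y)`, so every polynomial outside `(x, y)` is already a unit
modulo `(y, x²)`; hence `R/(y, x²)R ≅ k[x,y]/(y, x²) ≅ k[x]/(x²)`, which has basis `1, x`.
-/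

open MvPolynomial

theorem Ideal.span_pair_mul_left_unit {α : Type*} [CommSemiring α] {u : α} (hu : IsUnit u)
    (x y : α) : Ideal.span {x, u * y} = Ideal.span {x, y} := by
  rw [Ideal.span_insert, Ideal.span_insert, Ideal.span_singleton_mul_left_unit hu]

theorem Ideal.isUnit_mk_of_le_radical {A : Type*} [CommRing A] {M J : Ideal A}
    (hM : M.IsMaximal) (hMJ : M ≤ J.radical) {s : A} (hs : s ∉ M) :
    IsUnit (Ideal.Quotient.mk J s) := by
  have htop : Ideal.span {s} ⊔ J = ⊤ := by
    obtain ⟨a, m, hm, hsum⟩ := hM.exists_inv hs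
    rw [← Ideal.radical_eq_top, Ideal.eq_top_iff_one, ← hsum]
    exact add_mem (Ideal.mul_mem_left _ _ (Ideal.le_radical
      (Ideal.mem_sup_left (Ideal.mem_span_singleton_self s))))
      (Ideal.radical_mono le_sup_right (hMJ hm))
  obtain ⟨a, b, hb, hab⟩ := Ideal.mem_span_singleton_sup.mp ((Ideal.eq_top_iff_one _).mp htop)
  refine .of_mul_eq_one (Ideal.Quotient.mk J a) ?_
  rw [← map_mul, mul_comm, ← map_one (Ideal.Quotient.mk J), Ideal.Quotient.eq, ← hab]
  simpa using hb

/-- `Aₘ ⧸ J Aₘ` is the localization of `A ⧸ J` at the image of `A \ M`, which consists of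
units. -/
noncomputable def Localization.AtPrime.equivQuotientMapOfLeRadical (R : Type*) {A : Type*}
    [CommRing R] [CommRing A] [Algebra R A] {M : Ideal A} [M.IsPrime] (hM : M.IsMaximal)
    {J : Ideal A} (hMJ : M ≤ J.radical) :
    (A ⧸ J) ≃ₐ[R] Localization.AtPrime M ⧸ J.map (algebraMap A (Localization.AtPrime M)) :=
  haveI : IsScalarTower R (A ⧸ J)
      (Localization.AtPrime M ⧸ J.map (algebraMap A (Localization.AtPrime M))) :=
    IsScalarTower.of_algebraMap_eq fun _ => rfl
  (IsLocalization.atUnits _ (Algebra.algebraMapSubmonoid (A ⧸ J) M.primeCompl) <| by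
    rintro _ ⟨s, hs, rfl⟩
    exact Ideal.isUnit_mk_of_le_radical hM hMJ hs).restrictScalars R

noncomputable def MvPolynomial.quotientSpanXOneAevalEquiv (R : Type*) [CommRing R]
    (p : Polynomial R) :
    (MvPolynomial (Fin 2) R ⧸
        Ideal.span {X 1, Polynomial.aeval (X 0 : MvPolynomial (Fin 2) R) p}) ≃ₐ[R]
      Polynomial R ⧸ Ideal.span {p} := by
  refine AlgEquiv.ofAlgHom
    (Ideal.Quotient.liftₐ _ (aeval ![Ideal.Quotient.mkₐ R _ Polynomial.X, 0]) fun a ha => ?_)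
    (Ideal.Quotient.liftₐ _ (Polynomial.aeval (Ideal.Quotient.mkₐ R _ (X 0))) fun a ha => ?_)
    ?_ ?_
  · obtain ⟨c, d, rfl⟩ := Ideal.mem_span_pair.mp ha
    rw [map_add, map_mul, map_mul, ← Polynomial.aeval_algHom_apply, aeval_X, aeval_X,
      Matrix.cons_val_zero, Matrix.cons_val_one, Polynomial.aeval_algHom_apply,
      Polynomial.aeval_X_left_apply]
    simp
  · obtain ⟨c, rfl⟩ := Ideal.mem_span_singleton.mp ha
    rw [map_mul, Polynomial.aeval_algHom_apply _ _ p, Ideal.Quotient.mkₐ_eq_mk,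
      Ideal.Quotient.eq_zero_iff_mem.mpr (Ideal.subset_span (by simp)), zero_mul]
  · refine Ideal.Quotient.algHom_ext _ (Polynomial.algHom_ext ?_)
    rw [AlgHom.comp_assoc, Ideal.Quotient.liftₐ_comp, AlgHom.comp_apply, Polynomial.aeval_X,
      ← AlgHom.comp_apply, Ideal.Quotient.liftₐ_comp]
    simp
  · refine Ideal.Quotient.algHom_ext _
      (MvPolynomial.algHom_ext (Fin.forall_fin_two.mpr ⟨?_, ?_⟩))
    all_goals rw [AlgHom.comp_assoc, Ideal.Quotient.liftₐ_comp, AlgHom.comp_apply, aeval_X]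
    · rw [Matrix.cons_val_zero, ← AlgHom.comp_apply, Ideal.Quotient.liftₐ_comp]
      simp
    · simpa using (Ideal.Quotient.eq_zero_iff_mem.mpr (Ideal.subset_span (by simp))).symm

/-- If `R` is the localization of `k[x,y]` at the maximal ideal `(x,y)`, then
`R/(y, y - x³ + x²)R` has dimension `2` as a `k`-vector space. -/
theorem stmt_2 (k : Type) [Field k] (P : Ideal (MvPolynomial (Fin 2) k)) [P.IsPrime]
    (hPmax : P.IsMaximal)
    (hP : P = Ideal.span {MvPolynomial.X 0, MvPolynomial.X 1}) :
    Module.finrank k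
      (Localization.AtPrime P ⧸
        Ideal.map (algebraMap (MvPolynomial (Fin 2) k) (Localization.AtPrime P))
          (Ideal.span {MvPolynomial.X 1,
            MvPolynomial.X 1 - MvPolynomial.X 0 ^ 3 + MvPolynomial.X 0 ^ 2})) = 2 := by
  have hX0 : X 0 ∈ P := hP ▸ Ideal.subset_span (by simp)
  have hunit : IsUnit (algebraMap _ (Localization.AtPrime P) (1 - X 0 : MvPolynomial (Fin 2) k)) :=
    IsLocalization.map_units _ (⟨1 - X 0, fun h => hPmax.ne_top <|
      (Ideal.eq_top_iff_one P).mpr (by simpa using add_mem h hX0)⟩ : P.primeCompl)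
  have hspan : (Ideal.span {X 1, X 1 - X 0 ^ 3 + X 0 ^ 2} : Ideal (MvPolynomial (Fin 2) k)) =
      Ideal.span {X 1, (1 - X 0) * X 0 ^ 2} := by
    rw [show (X 1 - X 0 ^ 3 + X 0 ^ 2 : MvPolynomial (Fin 2) k) = (1 - X 0) * X 0 ^ 2 + 1 * X 1
      by ring, Ideal.span_pair_add_mul_left]
  have hrad : P ≤ (Ideal.span {X 1, X 0 ^ 2}).radical := by
    rw [hP, Ideal.span_le, Set.insert_subset_iff, Set.singleton_subset_iff]
    exact ⟨⟨2, Ideal.subset_span (by simp)⟩, Ideal.le_radical (Ideal.subset_span (by simp))⟩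
  rw [hspan, Ideal.map_span, Set.image_pair, map_mul, Ideal.span_pair_mul_left_unit hunit,
    ← Set.image_pair, ← Ideal.map_span,
    ← (Localization.AtPrime.equivQuotientMapOfLeRadical k hPmax hrad).toLinearEquiv.finrank_eq,
    ← Polynomial.aeval_X_pow (R := k) (X 0 : MvPolynomial (Fin 2) k),
    (MvPolynomial.quotientSpanXOneAevalEquiv k _).toLinearEquiv.finrank_eq,
    finrank_quotient_span_eq_natDegree, Polynomial.natDegree_X_pow]
end

section
/- Let R be the localization of k[x,y] at the maximal ideal (x-1, y). Then R/(y, y - x^3 + x^2)R has dimension 1 as a k-vector space. -/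
/-! Since `x` is a unit in `R` and `y - x³ + x² = y - x²(x - 1)`, the ideal `(y, y - x³ + x²)R`
is the maximal ideal `(x - 1, y)R`. The quotient is therefore the residue field of `R`, which is
`k[x,y]/(x - 1, y) ≅ k` via evaluation at `(1, 0)`. -/

open MvPolynomial IsLocalRing

theorem Ideal.span_pair_mul_left_unit_s3 {S : Type*} [CommRing S] {u : S} (hu : IsUnit u)
    (a b : S) : Ideal.span {u * a, b} = Ideal.span {a, b} := by
  rw [Ideal.span_insert, Ideal.span_singleton_mul_left_unit hu, ← Ideal.span_insert]

theorem MvPolynomial.finrank_quotient_ker_aeval {k σ : Type*} [Field k] (c : σ → k) :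
    Module.finrank k (MvPolynomial σ k ⧸ RingHom.ker (aeval (R := k) c)) = 1 := by
  have hsurj : Function.Surjective (aeval (R := k) c) := fun x => ⟨C x, aeval_C c x⟩
  rw [(Ideal.quotientKerAlgEquivOfSurjective hsurj).toLinearEquiv.finrank_eq,
    Module.finrank_self]

theorem Localization.AtPrime.finrank_quotient_maximalIdeal {k A : Type*} [Field k] [CommRing A]
    [Algebra k A] (P : Ideal A) [P.IsMaximal] :
    Module.finrank k (Localization.AtPrime P ⧸ maximalIdeal (Localization.AtPrime P)) =
      Module.finrank k (A ⧸ P) := by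
  rw [← pow_one (maximalIdeal _)]
  conv_rhs => rw [← pow_one P]
  exact ((IsLocalization.AtPrime.equivQuotMaximalIdealPow P _ 1).restrictScalars
    k).toLinearEquiv.finrank_eq.symm

/-- If `R` is the localization of `k[x,y]` at the maximal ideal `(x-1, y)`, then
`R/(y, y - x³ + x²)R` has dimension `1` as a `k`-vector space. -/
theorem stmt_3 (k : Type) [Field k] (P : Ideal (MvPolynomial (Fin 2) k)) [P.IsPrime]
    (hPmax : P.IsMaximal)
    (hP : P = Ideal.span {MvPolynomial.X 0 - 1, MvPolynomial.X 1}) :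
    Module.finrank k
      (Localization.AtPrime P ⧸
        Ideal.map (algebraMap (MvPolynomial (Fin 2) k) (Localization.AtPrime P))
          (Ideal.span {MvPolynomial.X 1,
            MvPolynomial.X 1 - MvPolynomial.X 0 ^ 3 + MvPolynomial.X 0 ^ 2})) = 1 := by
  have hker : P = RingHom.ker (aeval (![1, 0] : Fin 2 → k)) := by
    refine hPmax.eq_of_le (RingHom.ker_ne_top _) ?_
    rw [hP, Ideal.span_le, Set.pair_subset_iff]
    simp
  have hX0 : (X 0 : MvPolynomial (Fin 2) k) ∈ P.primeCompl := by
    simp [hker, Ideal.primeCompl]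
  set f := algebraMap (MvPolynomial (Fin 2) k) (Localization.AtPrime P)
  have hmap : Ideal.map f (Ideal.span {X 1, X 1 - X 0 ^ 3 + X 0 ^ 2}) = maximalIdeal _ := by
    have hf : f (X 1 - X 0 ^ 3 + X 0 ^ 2) = f (X 1) - f (X 0) ^ 2 * f (X 0 - 1) := by
      simp only [map_sub, map_add, map_pow, map_one]; ring
    rw [← Localization.AtPrime.map_eq_maximalIdeal, congrArg (Ideal.map f) hP, Ideal.map_span,
      Ideal.map_span, Set.image_pair, Set.image_pair, hf,
      Ideal.span_pair_sub_right', Ideal.span_pair_comm, Ideal.span_pair_mul_left_unit_s3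
        ((IsLocalization.map_units _ ⟨_, hX0⟩).pow 2)]
  have := hPmax
  rw [hmap, Localization.AtPrime.finrank_quotient_maximalIdeal, hker,
    MvPolynomial.finrank_quotient_ker_aeval]
end

section
/- In the polynomial ring R = k[x,y,z,w], with I = (xz, xw, yz, yw) and J = (x - z, y - w), the quotient R_m/(I + J)R_m, where m = (x,y,z,w), has dimension 3 as a k-vector space. -/
open MvPolynomial TrivSqZeroExt

/-! Modulo `J` we may identify `z` with `x` and `w` with `y`, and then `I` becomes `(x², xy, y²)`.
So `R/(I+J)` is the trivial square-zero extension `k ⊕ k²`: evaluating `x, z ↦ (1,0)` and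
`y, w ↦ (0,1)` in it is surjective with kernel exactly `I + J`, as `x ↦ x̄, y ↦ ȳ` is a section.
Every variable squares into `I + J`, so `m` lies in the radical of `I + J`; hence elements outside
`m` are already units modulo `I + J`, and localizing at `m` does not change the quotient. -/

section Localization

variable {A : Type*} [CommRing A]

theorem Ideal.Quotient.isUnit_mk_of_le_radical {P Q : Ideal A} (hP : P.IsMaximal)
    (hPQ : P ≤ Q.radical) {s : A} (hs : s ∉ P) : IsUnit (Ideal.Quotient.mk Q s) := by
  obtain ⟨a, p, hp, hps⟩ := hP.exists_inv hs
  obtain ⟨n, hpn⟩ := hPQ hp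
  have hnil : IsNilpotent (Ideal.Quotient.mk Q p) :=
    ⟨n, by rw [← map_pow, Ideal.Quotient.eq_zero_iff_mem]; exact hpn⟩
  have hmul : Ideal.Quotient.mk Q s * Ideal.Quotient.mk Q a = 1 - Ideal.Quotient.mk Q p := by
    rw [eq_sub_iff_add_eq, ← map_mul, ← map_add, mul_comm, hps, map_one]
  exact isUnit_of_mul_isUnit_left (hmul ▸ hnil.isUnit_one_sub)

noncomputable def quotientAlgEquivQuotientMapOfIsUnit (M : Submonoid A) (S : Type*) [CommRing S]
    [Algebra A S] [IsLocalization M S] (Q : Ideal A)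
    (hM : ∀ m ∈ M, IsUnit (Ideal.Quotient.mk Q m)) :
    (A ⧸ Q) ≃ₐ[A] S ⧸ Q.map (algebraMap A S) :=
  (IsLocalization.atUnits (A ⧸ Q) (Algebra.algebraMapSubmonoid (A ⧸ Q) M)
    (by rintro _ ⟨m, hm, rfl⟩; exact hM m hm)).restrictScalars A

end Localization

section FirstOrder

variable (k : Type*) [Field k]

noncomputable def intersectionIdeal : Ideal (MvPolynomial (Fin 4) k) :=
  Ideal.span {X 0 * X 2, X 0 * X 3, X 1 * X 2, X 1 * X 3} + Ideal.span {X 0 - X 2, X 1 - X 3}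

noncomputable def firstOrderEval : MvPolynomial (Fin 4) k →ₐ[k] TrivSqZeroExt k (k × k) :=
  aeval fun i => inr (![(1, 0), (0, 1), (1, 0), (0, 1)] i)

theorem firstOrderEval_surjective : Function.Surjective (firstOrderEval k) := by
  intro t
  refine ⟨C t.fst + t.snd.1 • X 0 + t.snd.2 • X 1, ?_⟩
  ext <;> simp [firstOrderEval, algebraMap_eq_inl]

theorem intersectionIdeal_le_ker_firstOrderEval :
    intersectionIdeal k ≤ RingHom.ker (firstOrderEval k) := by
  simp only [intersectionIdeal, Submodule.add_eq_sup, sup_le_iff, Ideal.span_le,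
    Set.insert_subset_iff, Set.singleton_subset_iff, SetLike.mem_coe, RingHom.mem_ker]
  simp [firstOrderEval, inr_mul_inr]

theorem mk_X_two :
    Ideal.Quotient.mk (intersectionIdeal k) (X 2) = Ideal.Quotient.mk (intersectionIdeal k) (X 0) :=
  (Ideal.Quotient.eq.2 (Ideal.mem_sup_right (Ideal.subset_span (by simp)))).symm

theorem mk_X_three :
    Ideal.Quotient.mk (intersectionIdeal k) (X 3) = Ideal.Quotient.mk (intersectionIdeal k) (X 1) :=
  (Ideal.Quotient.eq.2 (Ideal.mem_sup_right (Ideal.subset_span (by simp)))).symm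

theorem mk_X_mul_mk_X_eq_zero {i j : Fin 4} (hi : i < 2) (hj : 2 ≤ j) :
    Ideal.Quotient.mk (intersectionIdeal k) (X i) * Ideal.Quotient.mk _ (X j) = 0 := by
  rw [← map_mul, Ideal.Quotient.eq_zero_iff_mem]
  refine Ideal.mem_sup_left (Ideal.subset_span ?_)
  fin_cases i <;> fin_cases j <;> simp_all

noncomputable def firstOrderSection :
    TrivSqZeroExt k (k × k) →ₐ[k] MvPolynomial (Fin 4) k ⧸ intersectionIdeal k :=
  liftEquivOfComm
    ⟨(LinearMap.toSpanSingleton k _ (Ideal.Quotient.mk _ (X 0))).coprod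
      (LinearMap.toSpanSingleton k _ (Ideal.Quotient.mk _ (X 1))), fun a b => by
        simp only [LinearMap.coprod_apply, LinearMap.toSpanSingleton_apply]
        conv_lhs => arg 2; rw [← mk_X_two, ← mk_X_three]
        simp [add_mul, mul_add, mk_X_mul_mk_X_eq_zero]⟩

theorem firstOrderSection_comp_firstOrderEval :
    (firstOrderSection k).comp (firstOrderEval k) = Ideal.Quotient.mkₐ k (intersectionIdeal k) := by
  ext i
  fin_cases i <;> simp [firstOrderSection, firstOrderEval, mk_X_two, mk_X_three]

theorem ker_firstOrderEval : RingHom.ker (firstOrderEval k) = intersectionIdeal k := by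
  refine le_antisymm (fun p hp => ?_) (intersectionIdeal_le_ker_firstOrderEval k)
  rw [← Ideal.Quotient.eq_zero_iff_mem, ← Ideal.Quotient.mkₐ_eq_mk k,
    ← firstOrderSection_comp_firstOrderEval, AlgHom.comp_apply, RingHom.mem_ker.mp hp, map_zero]

theorem finrank_quotient_intersectionIdeal :
    Module.finrank k (MvPolynomial (Fin 4) k ⧸ intersectionIdeal k) = 3 := by
  rw [← ker_firstOrderEval,
    (Ideal.quotientKerAlgEquivOfSurjective (firstOrderEval_surjective k)).toLinearEquiv.finrank_eq]
  change Module.finrank k (k × (k × k)) = 3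
  simp

theorem span_X_le_radical_intersectionIdeal :
    Ideal.span {X 0, X 1, X 2, X 3} ≤ (intersectionIdeal k).radical := by
  have hX (i : Fin 4) : X i ∈ (intersectionIdeal k).radical :=
    ⟨2, by rw [← ker_firstOrderEval, RingHom.mem_ker, map_pow, pow_two]; simp [firstOrderEval]⟩
  simp [Ideal.span_le, Set.insert_subset_iff, hX]

end FirstOrder

/-- In `R = k[x,y,z,w]` with `I = (xz,xw,yz,yw)`, `J = (x-z, y-w)` and `m = (x,y,z,w)`,
the quotient `R_m/(I+J)R_m` has dimension `3` as a `k`-vector space. -/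
theorem stmt_4 (k : Type) [Field k] (P : Ideal (MvPolynomial (Fin 4) k)) [P.IsPrime]
    (hPmax : P.IsMaximal)
    (hP : P = Ideal.span {X 0, X 1, X 2, X 3})
    (I J : Ideal (MvPolynomial (Fin 4) k))
    (hI : I = Ideal.span {X 0 * X 2, X 0 * X 3, X 1 * X 2, X 1 * X 3})
    (hJ : J = Ideal.span {X 0 - X 2, X 1 - X 3}) :
    Module.finrank k
      (Localization.AtPrime P ⧸
        Ideal.map (algebraMap (MvPolynomial (Fin 4) k) (Localization.AtPrime P)) (I + J)) = 3 := by
  subst hI hJ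
  have hunit (s : MvPolynomial (Fin 4) k) (hs : s ∈ P.primeCompl) :
      IsUnit (Ideal.Quotient.mk (intersectionIdeal k) s) :=
    Ideal.Quotient.isUnit_mk_of_le_radical hPmax
      (hP ▸ span_X_le_radical_intersectionIdeal k) hs
  exact ((quotientAlgEquivQuotientMapOfIsUnit P.primeCompl (Localization.AtPrime P) _
    hunit).restrictScalars k).toLinearEquiv.finrank_eq.symm.trans
    (finrank_quotient_intersectionIdeal k)
end

section
/- The kernel of the k-algebra homomorphism k[x,y,z,w] → k[s,t] sending x ↦ s^4, y ↦ s^3 t, z ↦ s t^3, w ↦ t^4 is the ideal generated by yz − xw, z^3 − yw^2, xz^2 − y^2 w, and y^3 − x^2 z. -/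
/-!
The four binomials form a Gröbner basis with leading monomials `yz, z³, xz², y³`. Rewriting a
leading monomial into the other term of its binomial strictly lowers the weight `2·deg_y + 3·deg_z`,
so modulo the ideal every polynomial is a combination of standard monomials, those divisible by none
of `yz, z³, xz², y³`. The parametrization sends distinct standard monomials to distinct monomials
in `s, t`, so a kernel element in standard form has no nonzero coefficient.
-/

open MvPolynomial

theorem RingHom.ker_eq_of_restrictScalars_sup_eq_top {k A B : Type*} [CommSemiring k] [Ring A]
    [Ring B] [Algebra k A] [Algebra k B] (φ : A →ₐ[k] B) {I : Ideal A} {W : Submodule k A}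
    (hI : I ≤ RingHom.ker φ) (hW : I.restrictScalars k ⊔ W = ⊤)
    (hφ : ∀ v ∈ W, φ v = 0 → v = 0) :
    RingHom.ker φ = I := by
  refine le_antisymm (fun f hf => ?_) hI
  obtain ⟨i, hi, v, hv, rfl⟩ := Submodule.mem_sup.mp (hW ▸ Submodule.mem_top (x := f))
  rw [RingHom.mem_ker, map_add, hI hi, zero_add] at hf
  rwa [hφ v hv hf, add_zero]

namespace MvPolynomial

variable {σ τ R : Type*} [CommRing R]

/-- A pair `(p, q)` in `rules` stands for the rewriting rule `X^p ↦ X^q`; the standard exponents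
are those to which no rule applies. -/
def standardExponents (rules : Set ((σ →₀ ℕ) × (σ →₀ ℕ))) : Set (σ →₀ ℕ) :=
  {m | ∀ r ∈ rules, ¬ r.1 ≤ m}

theorem restrictScalars_sup_restrictSupport_eq_top {I : Ideal (MvPolynomial σ R)}
    {rules : Set ((σ →₀ ℕ) × (σ →₀ ℕ))} (w : (σ →₀ ℕ) →+ ℕ)
    (hI : ∀ r ∈ rules, monomial r.1 (1 : R) - monomial r.2 1 ∈ I)
    (hw : ∀ r ∈ rules, w r.2 < w r.1) :
    I.restrictScalars R ⊔ restrictSupport R (standardExponents rules) = ⊤ := by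
  set M := I.restrictScalars R ⊔ restrictSupport R (standardExponents rules)
  have hmon : ∀ m, monomial m (1 : R) ∈ M := by
    intro m
    induction h : w m using Nat.strong_induction_on generalizing m with
    | _ n ih =>
      by_cases hstd : m ∈ standardExponents rules
      · exact Submodule.mem_sup_right ((monomial_mem_restrictSupport R).mpr (.inl hstd))
      obtain ⟨r, hr, hle⟩ : ∃ r ∈ rules, r.1 ≤ m := by
        simpa [standardExponents] using hstd
      have hsplit : monomial m (1 : R) = monomial (m - r.1) 1 * (monomial r.1 1 - monomial r.2 1)
          + monomial (m - r.1 + r.2) 1 := by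
        rw [mul_sub, monomial_mul, monomial_mul, one_mul, tsub_add_cancel_of_le hle]
        ring
      rw [hsplit]
      refine M.add_mem (Submodule.mem_sup_left (I.mul_mem_left _ (hI r hr))) (ih _ ?_ _ rfl)
      rw [← h, ← tsub_add_cancel_of_le hle, map_add, map_add, tsub_add_cancel_of_le hle]
      exact Nat.add_lt_add_left (hw r hr) _
  refine Submodule.eq_top_iff'.mpr fun f => ?_
  induction f using MvPolynomial.induction_on' with
  | monomial m c => simpa [smul_monomial] using M.smul_mem c (hmon m)
  | add p q hp hq => exact M.add_mem hp hq

theorem aeval_monomial_one_monomial (e : σ → τ →₀ ℕ) (n : σ →₀ ℕ) (c : R) :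
    aeval (fun i => monomial (e i) (1 : R)) (monomial n c) = monomial (Finsupp.weight e n) c := by
  classical
  rw [aeval_monomial, Finsupp.weight_apply, Finsupp.sum, monomial_sum_index]
  simp [Finsupp.prod, monomial_pow]

theorem coeff_aeval_monomial_one {e : σ → τ →₀ ℕ} {S : Set (σ →₀ ℕ)}
    (hS : Set.InjOn (Finsupp.weight e) S) {f : MvPolynomial σ R} (hf : f ∈ restrictSupport R S)
    {m : σ →₀ ℕ} (hm : m ∈ S) :
    coeff (Finsupp.weight e m) (aeval (fun i => monomial (e i) (1 : R)) f) = coeff m f := by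
  classical
  conv_lhs => rw [f.as_sum, map_sum, coeff_sum]
  simp only [aeval_monomial_one_monomial, coeff_monomial]
  rw [Finset.sum_eq_single m]
  · simp
  · intro n hn hnm
    rw [if_neg (mt (hS (hf hn) hm) hnm)]
  · intro hmf
    simpa using hmf

theorem ker_aeval_monomial_one_eq_span {e : σ → τ →₀ ℕ} {rules : Set ((σ →₀ ℕ) × (σ →₀ ℕ))}
    (w : (σ →₀ ℕ) →+ ℕ) (hrules : ∀ r ∈ rules, Finsupp.weight e r.1 = Finsupp.weight e r.2)
    (hw : ∀ r ∈ rules, w r.2 < w r.1)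
    (hinj : Set.InjOn (Finsupp.weight e) (standardExponents rules)) :
    RingHom.ker (aeval fun i => monomial (e i) (1 : R)) =
      Ideal.span ((fun r => monomial r.1 (1 : R) - monomial r.2 1) '' rules) := by
  refine RingHom.ker_eq_of_restrictScalars_sup_eq_top _ ?_
    (restrictScalars_sup_restrictSupport_eq_top w (fun r hr => Ideal.subset_span ⟨r, hr, rfl⟩) hw)
    fun f hf hf0 => ?_
  · rw [Ideal.span_le]
    rintro _ ⟨r, hr, rfl⟩
    rw [SetLike.mem_coe, RingHom.mem_ker, map_sub, aeval_monomial_one_monomial,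
      aeval_monomial_one_monomial, hrules r hr, sub_self]
  · ext m
    by_cases hm : m ∈ standardExponents rules
    · rw [← coeff_aeval_monomial_one hinj hf hm, hf0, coeff_zero, coeff_zero]
    · exact notMem_support_iff.mp (mt (fun h => hf h) hm)

end MvPolynomial

section RationalQuartic

open Finsupp

noncomputable def quarticExp : Fin 4 → Fin 2 →₀ ℕ :=
  ![single 0 4, single 0 3 + single 1 1, single 0 1 + single 1 3, single 1 4]

def quarticRules : Set ((Fin 4 →₀ ℕ) × (Fin 4 →₀ ℕ)) :=
  {(single 1 1 + single 2 1, single 0 1 + single 3 1),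
    (single 2 3, single 1 1 + single 3 2),
    (single 0 1 + single 2 2, single 1 2 + single 3 1),
    (single 1 3, single 0 2 + single 2 1)}

theorem quartic_param_eq (k : Type*) [CommSemiring k] :
    (![X 0 ^ 4, X 0 ^ 3 * X 1, X 0 * X 1 ^ 3, X 1 ^ 4] : Fin 4 → MvPolynomial (Fin 2) k) =
      fun i => monomial (quarticExp i) 1 := by
  funext i
  fin_cases i <;> simp [quarticExp, X, monomial_pow, monomial_mul]

theorem quartic_binomials_eq (k : Type*) [CommRing k] :
    ({X 1 * X 2 - X 0 * X 3, X 2 ^ 3 - X 1 * X 3 ^ 2, X 0 * X 2 ^ 2 - X 1 ^ 2 * X 3,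
        X 1 ^ 3 - X 0 ^ 2 * X 2} : Set (MvPolynomial (Fin 4) k)) =
      (fun r => monomial r.1 1 - monomial r.2 1) '' quarticRules := by
  simp [quarticRules, Set.image_insert_eq, X, monomial_pow, monomial_mul]

theorem weight_quarticExp_apply_zero (m : Fin 4 →₀ ℕ) :
    weight quarticExp m 0 = 4 * m 0 + 3 * m 1 + m 2 := by
  simp [quarticExp, weight_eq_sum, Fin.sum_univ_four]
  ring

theorem weight_quarticExp_apply_one (m : Fin 4 →₀ ℕ) :
    weight quarticExp m 1 = m 1 + 3 * m 2 + 4 * m 3 := by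
  simp [quarticExp, weight_eq_sum, Fin.sum_univ_four]
  ring

theorem weight_quarticExp_fst_eq_snd {r : (Fin 4 →₀ ℕ) × (Fin 4 →₀ ℕ)} (hr : r ∈ quarticRules) :
    weight quarticExp r.1 = weight quarticExp r.2 := by
  simp only [quarticRules, Set.mem_insert_iff, Set.mem_singleton_iff] at hr
  rcases hr with rfl | rfl | rfl | rfl <;>
    ext i <;> fin_cases i <;> simp [weight_quarticExp_apply_zero, weight_quarticExp_apply_one]

theorem weight_snd_lt_fst_of_mem_quarticRules {r : (Fin 4 →₀ ℕ) × (Fin 4 →₀ ℕ)}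
    (hr : r ∈ quarticRules) :
    weight ![0, 2, 3, 0] r.2 < weight ![0, 2, 3, 0] r.1 := by
  simp only [quarticRules, Set.mem_insert_iff, Set.mem_singleton_iff] at hr
  rcases hr with rfl | rfl | rfl | rfl <;> simp [weight_eq_sum, Fin.sum_univ_four]

theorem mem_standardExponents_quarticRules_iff (m : Fin 4 →₀ ℕ) :
    m ∈ standardExponents quarticRules ↔
      ¬ (1 ≤ m 1 ∧ 1 ≤ m 2) ∧ m 2 ≤ 2 ∧ ¬ (1 ≤ m 0 ∧ 2 ≤ m 2) ∧ m 1 ≤ 2 := by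
  simp [standardExponents, quarticRules, Finsupp.le_def, Fin.forall_fin_succ]
  omega

theorem injOn_weight_quarticExp :
    Set.InjOn (weight quarticExp) (standardExponents quarticRules) := by
  intro m hm m' hm' h
  replace hm := (mem_standardExponents_quarticRules_iff m).mp hm
  replace hm' := (mem_standardExponents_quarticRules_iff m').mp hm'
  have h0 : 4 * m 0 + 3 * m 1 + m 2 = 4 * m' 0 + 3 * m' 1 + m' 2 := by
    rw [← weight_quarticExp_apply_zero, ← weight_quarticExp_apply_zero, h]
  have h1 : m 1 + 3 * m 2 + 4 * m 3 = m' 1 + 3 * m' 2 + 4 * m' 3 := by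
    rw [← weight_quarticExp_apply_one, ← weight_quarticExp_apply_one, h]
  have hb : m 1 ≤ 2 := hm.2.2.2
  have hc : m 2 ≤ 2 := hm.2.1
  have hb' : m' 1 ≤ 2 := hm'.2.2.2
  have hc' : m' 2 ≤ 2 := hm'.2.1
  have hbc : m 1 = m' 1 ∧ m 2 = m' 2 := by
    interval_cases m 1 <;> interval_cases m 2 <;> interval_cases m' 1 <;> interval_cases m' 2 <;>
      omega
  ext i
  fin_cases i <;> simp <;> omega

end RationalQuartic

/-- The kernel of `k[x,y,z,w] → k[s,t]`, `x ↦ s⁴, y ↦ s³t, z ↦ st³, w ↦ t⁴`, is the ideal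
`(yz − xw, z³ − yw², xz² − y²w, y³ − x²z)`. -/
theorem stmt_13 (k : Type) [Field k] :
    RingHom.ker (MvPolynomial.aeval
        (![(X 0) ^ 4, (X 0) ^ 3 * X 1, X 0 * (X 1) ^ 3, (X 1) ^ 4] :
          Fin 4 → MvPolynomial (Fin 2) k) :
        MvPolynomial (Fin 4) k →ₐ[k] MvPolynomial (Fin 2) k).toRingHom =
      Ideal.span {X 1 * X 2 - X 0 * X 3, (X 2) ^ 3 - X 1 * (X 3) ^ 2,
        X 0 * (X 2) ^ 2 - (X 1) ^ 2 * X 3, (X 1) ^ 3 - (X 0) ^ 2 * X 2} := by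
  rw [quartic_param_eq, quartic_binomials_eq]
  exact ker_aeval_monomial_one_eq_span (Finsupp.weight ![0, 2, 3, 0])
    (fun _ => weight_quarticExp_fst_eq_snd) (fun _ => weight_snd_lt_fst_of_mem_quarticRules)
    injOn_weight_quarticExp
end
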